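/- Every almost even string x other than the single letter a decomposes uniquely as x = b·y·z with y and z almost even: there exist unique almost even strings y, z with x = byz. -/
import Mathlib


inductive Letter : Type
  | a | b
deriving DecidableEq

open Letter

def alpha (x : List Letter) : ℕ := x.count Letter.a
def beta (x : List Letter) : ℕ := x.count Letter.b

/-- x is "almost even": nonempty, α(x) = β(x)+1, and every proper prefix u has α(u) ≤ β(u). -/
def AE (x : List Letter) : Prop :=
  x ≠ [] ∧ alpha x = beta x + 1 ∧ ∀ u : List Letter, u <+: x → u ≠ x → alpha u ≤ beta u

def bal (x : List Letter) : ℤ := (alpha x : ℤ) - (beta x : ℤ)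

lemma bal_append (u v : List Letter) : bal (u ++ v) = bal u + bal v := by
  unfold bal alpha beta
  push_cast [List.count_append]
  ring

lemma bal_nil : bal [] = 0 := by simp [bal, alpha, beta]

lemma bal_eq_one_iff (u : List Letter) : bal u = 1 ↔ alpha u = beta u + 1 := by
  unfold bal; omega

lemma bal_nonpos_iff (u : List Letter) : bal u ≤ 0 ↔ alpha u ≤ beta u := by
  unfold bal; omega

lemma AE_iff (x : List Letter) :
    AE x ↔ x ≠ [] ∧ bal x = 1 ∧ ∀ u : List Letter, u <+: x → u ≠ x → bal u ≤ 0 := by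
  unfold AE
  simp only [bal_eq_one_iff, bal_nonpos_iff]

lemma bal_single_le (l : Letter) : bal [l] ≤ 1 ∧ -1 ≤ bal [l] := by
  cases l <;> simp [bal, alpha, beta]

lemma ivt (f : ℕ → ℤ) (hf : ∀ n, f (n+1) ≤ f n + 1) (h0 : f 0 = 0) (m : ℕ) (hm : 1 ≤ f m) :
    ∃ n ≤ m, f n = 1 := by
  induction m with
  | zero => omega
  | succ m ih =>
    by_cases h : 1 ≤ f m
    · obtain ⟨n, hn, he⟩ := ih h
      exact ⟨n, by omega, he⟩
    · have := hf m
      exact ⟨m+1, le_refl _, by omega⟩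

theorem stmt5 (x : List Letter) (hx : AE x) (hxa : x ≠ [Letter.a]) :
    ∃! p : List Letter × List Letter, AE p.1 ∧ AE p.2 ∧ x = Letter.b :: (p.1 ++ p.2) := by
  rw [AE_iff] at hx
  obtain ⟨hne, hbx, hpre⟩ := hx
  -- first letter is b
  obtain ⟨l, w, rfl⟩ : ∃ l w, x = l :: w := by
    cases x with
    | nil => exact absurd rfl hne
    | cons l w => exact ⟨l, w, rfl⟩
  have hl : l = Letter.b := by
    cases l with
    | b => rfl
    | a =>
      cases w with
      | nil => exact absurd rfl hxa
      | cons c w' =>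
        have h := hpre [Letter.a] ⟨c :: w', rfl⟩ (by simp)
        simp [bal, alpha, beta] at h
  subst hl
  -- balance of w
  have hbw : bal w = 2 := by
    have : bal ([Letter.b] ++ w) = bal [Letter.b] + bal w := bal_append _ _
    simp only [List.singleton_append] at this
    rw [hbx] at this
    have hb1 : bal [Letter.b] = -1 := by simp [bal, alpha, beta]
    omega
  -- prefixes of w have bal ≤ 1 (proper ones)
  have hprew : ∀ u : List Letter, u <+: w → u ≠ w → bal u ≤ 1 := by
    intro u hu hune
    have h1 : (Letter.b :: u) <+: (Letter.b :: w) := by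
      obtain ⟨t, rfl⟩ := hu
      exact ⟨t, rfl⟩
    have h2 : (Letter.b :: u) ≠ (Letter.b :: w) := by
      simp [hune]
    have := hpre _ h1 h2
    have : bal ([Letter.b] ++ u) ≤ 0 := by simpa using this
    rw [bal_append] at this
    have hb1 : bal [Letter.b] = -1 := by simp [bal, alpha, beta]
    omega
  -- IVT: there's n with bal (w.take n) = 1
  have hstep : ∀ n, bal (w.take (n+1)) ≤ bal (w.take n) + 1 := by
    intro n
    by_cases h : n < w.length
    · rw [List.take_succ]
      rw [bal_append]
      have : w[n]? = some w[n] := List.getElem?_eq_getElem h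
      rw [this]
      have := bal_single_le w[n]
      simp only [Option.toList_some]
      omega
    · rw [List.take_of_length_le (by omega), List.take_of_length_le (by omega)]
      omega
  have hex : ∃ n, bal (w.take n) = 1 := by
    obtain ⟨n, _, hn⟩ := ivt (fun n => bal (w.take n)) hstep (by simp [bal_nil]) w.length
      (by show 1 ≤ bal (w.take w.length); rw [List.take_of_length_le le_rfl]; omega)
    exact ⟨n, hn⟩
  classical
  set N := Nat.find hex with hN
  have hN1 : bal (w.take N) = 1 := Nat.find_spec hex
  have hNmin : ∀ k < N, bal (w.take k) ≠ 1 := fun k hk => Nat.find_min hex hk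
  have hNle : N ≤ w.length := by
    by_contra h
    rw [List.take_of_length_le (by omega)] at hN1
    omega
  set y := w.take N with hy
  set z := w.drop N with hz
  have hyz : y ++ z = w := List.take_append_drop N w
  have hylen : y.length = N := by
    rw [hy, List.length_take]; omega
  have hbz : bal z = 1 := by
    have := bal_append y z
    rw [hyz, hbw, hN1] at this
    omega
  have hAEy : AE y := by
    rw [AE_iff]
    refine ⟨?_, hN1, ?_⟩
    · intro h; rw [h, bal_nil] at hN1; omega
    · intro u hu hune
      have hulen : u.length < N := by
        have := hu.length_le
        rw [hylen] at this
        rcases lt_or_eq_of_le this with h | h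
        · exact h
        · exact absurd (hu.eq_of_length (by omega)) hune
      have huw : u = w.take u.length := by
        have huw' : u <+: w := hu.trans ⟨z, hyz⟩
        exact List.prefix_iff_eq_take.mp huw'
      have hne1 : bal u ≠ 1 := by rw [huw]; exact hNmin _ hulen
      have hle1 : bal u ≤ 1 := by
        apply hprew u (hu.trans ⟨z, hyz⟩)
        intro h
        have := congrArg List.length h
        omega
      omega
  have hAEz : AE z := by
    rw [AE_iff]
    refine ⟨?_, hbz, ?_⟩
    · intro h; rw [h, bal_nil] at hbz; omega
    · intro v hv hvne
      have h1 : (y ++ v) <+: w := by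
        rw [← hyz]
        obtain ⟨t, ht⟩ := hv
        exact ⟨t, by rw [List.append_assoc, ht]⟩
      have h2 : y ++ v ≠ w := by
        intro h
        rw [← hyz] at h
        exact hvne (List.append_cancel_left h)
      have := hprew _ h1 h2
      rw [bal_append, hN1] at this
      omega
  refine ⟨(y, z), ⟨hAEy, hAEz, by rw [hyz]⟩, ?_⟩
  rintro ⟨y', z'⟩ ⟨hy', hz', heq⟩
  simp only at heq hy' hz' ⊢
  have hw' : y' ++ z' = w := by
    injection heq with _ h
    exact h.symm
  rw [AE_iff] at hy' hz'
  have hAEy' := hAEy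
  rw [AE_iff] at hAEy'
  have hyy' : y = y' := by
    have hpy : y <+: w := ⟨z, hyz⟩
    have hpy' : y' <+: w := ⟨z', hw'⟩
    by_contra hne
    rcases List.prefix_or_prefix_of_prefix hpy hpy' with h | h
    · have := hy'.2.2 y h hne
      omega
    · have := hAEy'.2.2 y' h (fun hh => hne hh.symm)
      have := hy'.2.1
      omega
  have hzz' : z = z' := by
    have h : y ++ z = y ++ z' := by rw [hyz, hyy', hw']
    exact List.append_cancel_left h
  rw [← hyy', ← hzz']
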